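/- Let T, X, Y be bounded linear operators on H admitting A-adjoints T♯, X♯, Y♯ respectively. Then w_A(T∘X ± Y∘T) ≤ 2√2 · max{‖X‖_A, ‖Y‖_A} · √( w_A(T)² − | ‖Re_A(T)‖_A² − ‖Im_A(T)‖_A² | / 2 ), for both choices of sign. -/

import Mathlib

noncomputable section

open Complex ContinuousLinearMap

variable {H : Type*} [NormedAddCommGroup H] [InnerProductSpace ℂ H] [CompleteSpace H]

/-- The `A`-inner product `⟨x, y⟩_A = ⟨A x, y⟩`. -/
def innA (A : H →L[ℂ] H) (x y : H) : ℂ := @inner ℂ _ _ (A x) y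

/-- The `A`-seminorm `‖x‖_A = √⟨A x, x⟩`. -/
def vnormA (A : H →L[ℂ] H) (x : H) : ℝ := Real.sqrt (innA A x x).re

/-- The `A`-operator seminorm `‖T‖_A = sup {‖T x‖_A : ‖x‖_A = 1}`. -/
def opnormA (A T : H →L[ℂ] H) : ℝ :=
  sSup {r : ℝ | ∃ x : H, vnormA A x = 1 ∧ r = vnormA A (T x)}

/-- The `A`-numerical radius `w_A(T) = sup {|⟨T x, x⟩_A| : ‖x‖_A = 1}`. -/
def wA (A T : H →L[ℂ] H) : ℝ :=
  sSup {r : ℝ | ∃ x : H, vnormA A x = 1 ∧ r = ‖innA A (T x) x‖}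

/-- The `A`-numerical range `W_A(T) = {⟨T x, x⟩_A : ‖x‖_A = 1}`. -/
def WA (A T : H →L[ℂ] H) : Set ℂ :=
  {z : ℂ | ∃ x : H, vnormA A x = 1 ∧ z = innA A (T x) x}

/-- `Re_A(T) = (T + T♯)/2`, given an `A`-adjoint `Ts` of `T`. -/
def ReA (T Ts : H →L[ℂ] H) : H →L[ℂ] H := (2 : ℂ)⁻¹ • (T + Ts)

/-- `Im_A(T) = (T - T♯)/(2i)`, given an `A`-adjoint `Ts` of `T`. -/
def ImA (T Ts : H →L[ℂ] H) : H →L[ℂ] H := (2 * Complex.I)⁻¹ • (T - Ts)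

/-- `Ts` is an `A`-adjoint of `T`, i.e. `A ∘ Ts = T* ∘ A`. -/
def IsAAdjoint (A T Ts : H →L[ℂ] H) : Prop :=
  A.comp Ts = (ContinuousLinearMap.adjoint T).comp A


/-!
Write `A = Q†Q`, so that `‖x‖_A = ‖Q x‖` and an `A`-adjoint is an adjoint for the semi-inner
product `⟪Q ·, Q ·⟫`. For `‖x‖_A = 1` and `M = max(‖X‖_A, ‖Y‖_A)`,
`|⟨(TX ± YT)x, x⟩_A| ≤ |⟨X x, T♯x⟩_A| + |⟨T x, Y♯x⟩_A| ≤ M (‖T♯x‖_A + ‖T x‖_A)`.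
With `R = Re_A(T)` and `J = Im_A(T)` we have `T = R + iJ` and `T♯ = R - iJ`, so the parallelogram
law gives `‖T x‖_A² + ‖T♯x‖_A² = 2 (‖R x‖_A² + ‖J x‖_A²) ≤ 2 (‖R‖_A² + ‖J‖_A²)`. Polarization for
the `A`-selfadjoint `R` and `J` bounds `‖R‖_A, ‖J‖_A` by `w_A(T)`, hence
`‖R‖_A² + ‖J‖_A² = 2 max(‖R‖_A², ‖J‖_A²) - |‖R‖_A² - ‖J‖_A²| ≤ 2 w_A(T)² - |‖R‖_A² - ‖J‖_A²|`,
and `(s + t)² ≤ 2 (s² + t²)` finishes.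

The suprema involved are finite because an operator `S` with an `A`-adjoint is `A`-bounded. This
follows by iterating Cauchy–Schwarz for the `A`-selfadjoint `P = S♯S`:
`‖Q P x‖² ≤ ‖Q x‖ ‖Q P² x‖` together with `‖Q P^(2^n) x‖ ≤ ‖Q‖ ‖x‖ ‖P‖^(2^n)` forces
`‖Q P x‖ ≤ ‖P‖ ‖Q x‖`.
-/

open scoped InnerProductSpace

theorem le_of_forall_pow_two_pow_le_mul {x y K : ℝ} (hy : 0 ≤ y)
    (h : ∀ n : ℕ, x ^ 2 ^ n ≤ K * y ^ 2 ^ n) : x ≤ y := by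
  by_contra! hyx
  rcases hy.eq_or_lt with rfl | hy
  · simpa [hyx.not_ge] using h 0
  have hρ : 1 < x / y := (one_lt_div hy).2 hyx
  obtain ⟨n, hn⟩ := pow_unbounded_of_one_lt K hρ
  have hK : (x / y) ^ 2 ^ n ≤ K := by
    rw [div_pow, div_le_iff₀ (by positivity)]
    exact h n
  exact (hn.trans_le (pow_le_pow_right₀ hρ.le Nat.lt_two_pow_self.le)).not_ge hK

theorem le_mul_of_sq_le_mul_succ {a M B : ℝ} {c : ℕ → ℝ} (ha : 0 ≤ a) (hM : 0 ≤ M)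
    (hc₀ : 0 ≤ c 0) (hrec : ∀ n, c n ^ 2 ≤ a * c (n + 1))
    (hbd : ∀ n, c n ≤ B * M ^ 2 ^ n) : c 0 ≤ M * a := by
  rcases ha.eq_or_lt with rfl | ha
  · nlinarith [hrec 0]
  have key : ∀ n, c 0 ^ 2 ^ n * a ≤ a ^ 2 ^ n * c n := by
    intro n
    induction n with
    | zero => simp [mul_comm]
    | succ n ih =>
      refine le_of_mul_le_mul_right ?_ ha
      calc c 0 ^ 2 ^ (n + 1) * a * a = (c 0 ^ 2 ^ n * a) ^ 2 := by ring
        _ ≤ (a ^ 2 ^ n * c n) ^ 2 := pow_le_pow_left₀ (by positivity) ih 2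
        _ = a ^ 2 ^ (n + 1) * c n ^ 2 := by ring
        _ ≤ a ^ 2 ^ (n + 1) * (a * c (n + 1)) := by gcongr; exact hrec n
        _ = a ^ 2 ^ (n + 1) * c (n + 1) * a := by ring
  refine le_of_forall_pow_two_pow_le_mul (K := B / a) (by positivity) fun n => ?_
  rw [div_mul_eq_mul_div, le_div_iff₀ ha, mul_pow]
  calc c 0 ^ 2 ^ n * a ≤ a ^ 2 ^ n * c n := key n
    _ ≤ a ^ 2 ^ n * (B * M ^ 2 ^ n) := by gcongr; exact hbd n
    _ = B * (M ^ 2 ^ n * a ^ 2 ^ n) := by ring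

section SemiInner

variable {E F : Type*} [NormedAddCommGroup E] [InnerProductSpace ℂ E]
  [NormedAddCommGroup F] [InnerProductSpace ℂ F] {Q : E →L[ℂ] F}

def IsAdjointWrt (Q : E →L[ℂ] F) (S S' : E →L[ℂ] E) : Prop :=
  ∀ u v, ⟪Q (S u), Q v⟫_ℂ = ⟪Q u, Q (S' v)⟫_ℂ

namespace IsAdjointWrt

variable {S S' T T' P : E →L[ℂ] E}

theorem symm (h : IsAdjointWrt Q S S') : IsAdjointWrt Q S' S := fun u v => by
  rw [← inner_conj_symm, ← h v u, inner_conj_symm]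

theorem mul (hS : IsAdjointWrt Q S S') (hT : IsAdjointWrt Q T T') :
    IsAdjointWrt Q (S * T) (T' * S') := fun u v => by
  simp only [mul_apply_eq_comp]
  rw [hS, hT]

theorem pow (h : IsAdjointWrt Q P P) (k : ℕ) : IsAdjointWrt Q (P ^ k) (P ^ k) := by
  induction k with
  | zero => simp [IsAdjointWrt]
  | succ k ih => simpa [← pow_succ, ← pow_succ'] using ih.mul h

theorem add (hS : IsAdjointWrt Q S S') (hT : IsAdjointWrt Q T T') :
    IsAdjointWrt Q (S + T) (S' + T') := fun u v => by
  simp only [add_apply, map_add, inner_add_left, inner_add_right, hS u v, hT u v]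

theorem sub (hS : IsAdjointWrt Q S S') (hT : IsAdjointWrt Q T T') :
    IsAdjointWrt Q (S - T) (S' - T') := fun u v => by
  simp only [sub_apply, map_sub, inner_sub_left, inner_sub_right, hS u v, hT u v]

theorem smul (h : IsAdjointWrt Q S S') (c : ℂ) :
    IsAdjointWrt Q (c • S) ((starRingEnd ℂ) c • S') := fun u v => by
  simp only [smul_apply, map_smul, inner_smul_left, inner_smul_right, h u v]

theorem reA (h : IsAdjointWrt Q T T') : IsAdjointWrt Q (ReA T T') (ReA T T') := by
  simpa [ReA, map_inv₀, Complex.conj_ofNat, add_comm] using (h.add h.symm).smul 2⁻¹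

theorem imA (h : IsAdjointWrt Q T T') : IsAdjointWrt Q (ImA T T') (ImA T T') := by
  have hconj : (starRingEnd ℂ) (2 * I)⁻¹ • (T' - T) = ImA T T' := by
    simp only [ImA, map_inv₀, map_mul, Complex.conj_ofNat, Complex.conj_I, mul_neg, inv_neg,
      neg_smul, ← smul_neg, neg_sub]
  have h' := (h.sub h.symm).smul (2 * I)⁻¹
  rwa [hconj] at h'

theorem norm_sq_le (h : IsAdjointWrt Q S S') (x : E) :
    ‖Q (S x)‖ ^ 2 ≤ ‖Q x‖ * ‖Q (S' (S x))‖ :=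
  calc ‖Q (S x)‖ ^ 2 = (⟪Q x, Q (S' (S x))⟫_ℂ).re := by
        rw [← h]
        exact (inner_self_eq_norm_sq (𝕜 := ℂ) _).symm
    _ ≤ ‖⟪Q x, Q (S' (S x))⟫_ℂ‖ := Complex.re_le_norm _
    _ ≤ ‖Q x‖ * ‖Q (S' (S x))‖ := norm_inner_le_norm _ _

theorem norm_apply_le_of_self (h : IsAdjointWrt Q P P) (x : E) : ‖Q (P x)‖ ≤ ‖P‖ * ‖Q x‖ := by
  have hrec (n : ℕ) : ‖Q ((P ^ 2 ^ n) x)‖ ^ 2 ≤ ‖Q x‖ * ‖Q ((P ^ 2 ^ (n + 1)) x)‖ := by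
    simpa [pow_succ, pow_mul, sq, mul_apply_eq_comp] using (h.pow (2 ^ n)).norm_sq_le x
  have hbd (n : ℕ) : ‖Q ((P ^ 2 ^ n) x)‖ ≤ ‖Q‖ * ‖x‖ * ‖P‖ ^ 2 ^ n :=
    calc ‖Q ((P ^ 2 ^ n) x)‖ ≤ ‖Q‖ * (‖P ^ 2 ^ n‖ * ‖x‖) :=
          Q.le_opNorm_of_le ((P ^ 2 ^ n).le_opNorm x)
      _ ≤ ‖Q‖ * (‖P‖ ^ 2 ^ n * ‖x‖) := by gcongr; exact norm_pow_le' _ (by positivity)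
      _ = ‖Q‖ * ‖x‖ * ‖P‖ ^ 2 ^ n := by ring
  simpa using le_mul_of_sq_le_mul_succ (c := fun n => ‖Q ((P ^ 2 ^ n) x)‖)
    (norm_nonneg _) (norm_nonneg _) (norm_nonneg _) hrec hbd

theorem norm_apply_le (h : IsAdjointWrt Q S S') (x : E) :
    ‖Q (S x)‖ ≤ √‖S' * S‖ * ‖Q x‖ := by
  rw [← Real.sqrt_sq (norm_nonneg (Q x)), ← Real.sqrt_mul (norm_nonneg _)]
  refine Real.le_sqrt_of_sq_le ?_
  calc ‖Q (S x)‖ ^ 2 ≤ ‖Q x‖ * ‖Q ((S' * S) x)‖ := h.norm_sq_le x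
    _ ≤ ‖Q x‖ * (‖S' * S‖ * ‖Q x‖) := by gcongr; exact (h.symm.mul h).norm_apply_le_of_self x
    _ = ‖S' * S‖ * ‖Q x‖ ^ 2 := by ring

theorem im_inner_self_eq_zero (h : IsAdjointWrt Q P P) (z : E) :
    (⟪Q (P z), Q z⟫_ℂ).im = 0 := by
  rw [← Complex.conj_eq_iff_im, inner_conj_symm, h]

theorem four_mul_re_inner_eq (h : IsAdjointWrt Q P P) (u v : E) :
    4 * (⟪Q (P u), Q v⟫_ℂ).re =
      (⟪Q (P (u + v)), Q (u + v)⟫_ℂ).re - (⟪Q (P (u - v)), Q (u - v)⟫_ℂ).re := by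
  have hvu : (⟪Q (P v), Q u⟫_ℂ).re = (⟪Q (P u), Q v⟫_ℂ).re := by
    rw [h, ← inner_conj_symm, Complex.conj_re]
  simp only [map_add, map_sub, inner_add_left, inner_add_right, inner_sub_left, inner_sub_right,
    Complex.add_re, Complex.sub_re, hvu]
  ring

theorem norm_apply_le_of_abs_re_inner_le (h : IsAdjointWrt Q P P) {w : ℝ} (hw : 0 ≤ w)
    (hP : ∀ z, |(⟪Q (P z), Q z⟫_ℂ).re| ≤ w * ‖Q z‖ ^ 2) {x : E} (hx : ‖Q x‖ = 1) :
    ‖Q (P x)‖ ≤ w := by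
  set r := ‖Q (P x)‖ with hr
  -- polarization at `u = r x`, `v = P x`, where `re ⟪Q (P u), Q v⟫ = r ^ 3`
  have hcube : (⟪Q (P ((r : ℂ) • x)), Q (P x)⟫_ℂ).re = r ^ 3 := by
    rw [map_smul, map_smul, inner_smul_left, inner_self_eq_norm_sq_to_K, Complex.conj_ofReal, ← hr]
    simp [pow_succ, mul_assoc]
  have hrx : ‖Q ((r : ℂ) • x)‖ = r := by
    rw [map_smul, norm_smul, Complex.norm_real, Real.norm_of_nonneg (norm_nonneg _), hx, mul_one]
  have hpar : ‖Q ((r : ℂ) • x + P x)‖ ^ 2 + ‖Q ((r : ℂ) • x - P x)‖ ^ 2 = 4 * r ^ 2 := by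
    rw [map_add, map_sub, parallelogram_law_with_norm ℂ, hrx]
    ring
  have h4 := h.four_mul_re_inner_eq ((r : ℂ) • x) (P x)
  have hplus := (le_abs_self _).trans (hP ((r : ℂ) • x + P x))
  have hminus := (neg_le_abs _).trans (hP ((r : ℂ) • x - P x))
  have hcube_le : r * r ^ 2 ≤ w * r ^ 2 := by nlinarith
  rcases (norm_nonneg _ : 0 ≤ r).eq_or_lt with h0 | h0
  · linarith
  · exact le_of_mul_le_mul_right hcube_le (by positivity)

end IsAdjointWrt

theorem exists_norm_eq_one_and_eq_smul {x : E} (hx : ‖Q x‖ ≠ 0) :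
    ∃ u, ‖Q u‖ = 1 ∧ x = (‖Q x‖ : ℂ) • u :=
  ⟨(‖Q x‖⁻¹ : ℂ) • x, by simp [norm_smul, hx], by simp [smul_smul, hx]⟩

theorem apply_eq_reA_add_I_smul_imA (T T' : E →L[ℂ] E) (x : E) :
    T x = ReA T T' x + I • ImA T T' x := by
  simp only [ReA, ImA, smul_apply, add_apply, sub_apply, smul_smul]
  match_scalars <;> field_simp <;> ring

theorem apply_eq_reA_sub_I_smul_imA (T T' : E →L[ℂ] E) (x : E) :
    T' x = ReA T T' x - I • ImA T T' x := by
  simp only [ReA, ImA, smul_apply, add_apply, sub_apply, smul_smul]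
  match_scalars <;> field_simp <;> ring

theorem norm_sq_add_norm_sq_eq (Q : E →L[ℂ] F) (T T' : E →L[ℂ] E) (x : E) :
    ‖Q (T x)‖ ^ 2 + ‖Q (T' x)‖ ^ 2 = 2 * (‖Q (ReA T T' x)‖ ^ 2 + ‖Q (ImA T T' x)‖ ^ 2) := by
  have hpar := parallelogram_law_with_norm ℂ (Q (ReA T T' x)) (I • Q (ImA T T' x))
  rw [norm_smul, Complex.norm_I, one_mul] at hpar
  rw [apply_eq_reA_add_I_smul_imA T T' x, apply_eq_reA_sub_I_smul_imA T T' x, map_add, map_sub,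
    map_smul]
  linarith

namespace IsAdjointWrt

variable {T T' : E →L[ℂ] E}

theorem re_inner_reA (h : IsAdjointWrt Q T T') (z : E) :
    (⟪Q (ReA T T' z), Q z⟫_ℂ).re = (⟪Q (T z), Q z⟫_ℂ).re := by
  conv_rhs => rw [apply_eq_reA_add_I_smul_imA T T' z]
  simp [h.imA.im_inner_self_eq_zero z]

theorem re_inner_imA (h : IsAdjointWrt Q T T') (z : E) :
    (⟪Q (ImA T T' z), Q z⟫_ℂ).re = -(⟪Q (T z), Q z⟫_ℂ).im := by
  conv_rhs => rw [apply_eq_reA_add_I_smul_imA T T' z]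
  simp [h.reA.im_inner_self_eq_zero z]

end IsAdjointWrt

end SemiInner

theorem add_le_two_mul_sqrt_two_mul_sqrt {s t a b w : ℝ} (hs : 0 ≤ s) (ht : 0 ≤ t) (ha : 0 ≤ a)
    (hb : 0 ≤ b) (haw : a ≤ w) (hbw : b ≤ w) (h : s ^ 2 + t ^ 2 ≤ 2 * (a ^ 2 + b ^ 2)) :
    s + t ≤ 2 * √2 * √(w ^ 2 - |a ^ 2 - b ^ 2| / 2) := by
  have hE : a ^ 2 + b ^ 2 ≤ 2 * (w ^ 2 - |a ^ 2 - b ^ 2| / 2) := by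
    rcases le_total b a with hab | hab
    · rw [abs_of_nonneg (by nlinarith)]
      nlinarith
    · rw [abs_of_nonpos (by nlinarith)]
      nlinarith
  refine (pow_le_pow_iff_left₀ (by positivity) (by positivity) two_ne_zero).1 ?_
  rw [mul_pow, mul_pow, Real.sq_sqrt zero_le_two, Real.sq_sqrt (by nlinarith)]
  nlinarith [sq_nonneg (s - t)]

section SeminormA

variable {E F : Type*} [NormedAddCommGroup E] [InnerProductSpace ℂ E]
  [NormedAddCommGroup F] [InnerProductSpace ℂ F] {A : E →L[ℂ] E} {Q : E →L[ℂ] F}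
  {S S' T T' X X' Y Y' P : E →L[ℂ] E}

theorem vnormA_eq_norm (hQ : ∀ x y, innA A x y = ⟪Q x, Q y⟫_ℂ) (x : E) : vnormA A x = ‖Q x‖ := by
  rw [vnormA, hQ, ← Real.sqrt_sq (norm_nonneg (Q x))]
  exact congrArg Real.sqrt (inner_self_eq_norm_sq (𝕜 := ℂ) (Q x))

theorem opnormA_nonneg (A S : E →L[ℂ] E) : 0 ≤ opnormA A S :=
  Real.sSup_nonneg fun _ ⟨_, _, hr⟩ => hr ▸ Real.sqrt_nonneg _

theorem wA_nonneg (A T : E →L[ℂ] E) : 0 ≤ wA A T :=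
  Real.sSup_nonneg fun _ ⟨_, _, hr⟩ => hr ▸ norm_nonneg _

theorem IsAdjointWrt.norm_apply_le_opnormA (hQ : ∀ x y, innA A x y = ⟪Q x, Q y⟫_ℂ)
    (h : IsAdjointWrt Q S S') (x : E) : ‖Q (S x)‖ ≤ opnormA A S * ‖Q x‖ := by
  rcases eq_or_ne ‖Q x‖ 0 with hx | hx
  · simpa [hx] using h.norm_apply_le x
  obtain ⟨u, hu, hxu⟩ := exists_norm_eq_one_and_eq_smul hx
  have hbdd : BddAbove {r | ∃ x, vnormA A x = 1 ∧ r = vnormA A (S x)} := by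
    refine ⟨√‖S' * S‖, ?_⟩
    rintro _ ⟨y, hy, rfl⟩
    rw [vnormA_eq_norm hQ] at hy ⊢
    simpa [hy] using h.norm_apply_le y
  have hSu : ‖Q (S u)‖ ≤ opnormA A S :=
    le_csSup hbdd ⟨u, by rw [vnormA_eq_norm hQ, hu], by rw [vnormA_eq_norm hQ]⟩
  calc ‖Q (S x)‖ = ‖Q (S u)‖ * ‖Q x‖ := by
        conv_lhs => rw [hxu]
        rw [map_smul, map_smul, norm_smul, Complex.norm_real, norm_norm, mul_comm]
    _ ≤ opnormA A S * ‖Q x‖ := by gcongr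

theorem IsAdjointWrt.norm_apply_adjoint_le_opnormA (hQ : ∀ x y, innA A x y = ⟪Q x, Q y⟫_ℂ)
    (h : IsAdjointWrt Q S S') (x : E) : ‖Q (S' x)‖ ≤ opnormA A S * ‖Q x‖ := by
  have hsq : ‖Q (S' x)‖ * ‖Q (S' x)‖ ≤ opnormA A S * ‖Q x‖ * ‖Q (S' x)‖ :=
    calc ‖Q (S' x)‖ * ‖Q (S' x)‖ = ‖Q (S' x)‖ ^ 2 := (sq _).symm
      _ ≤ ‖Q x‖ * ‖Q (S (S' x))‖ := h.symm.norm_sq_le x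
      _ ≤ ‖Q x‖ * (opnormA A S * ‖Q (S' x)‖) := by
        gcongr
        exact h.norm_apply_le_opnormA hQ _
      _ = opnormA A S * ‖Q x‖ * ‖Q (S' x)‖ := by ring
  rcases (norm_nonneg (Q (S' x))).eq_or_lt with h0 | h0
  · rw [← h0]
    exact mul_nonneg (opnormA_nonneg A S) (norm_nonneg _)
  · exact le_of_mul_le_mul_right hsq h0

theorem IsAdjointWrt.norm_inner_le_wA (hQ : ∀ x y, innA A x y = ⟪Q x, Q y⟫_ℂ)
    (h : IsAdjointWrt Q T T') (x : E) : ‖⟪Q (T x), Q x⟫_ℂ‖ ≤ wA A T * ‖Q x‖ ^ 2 := by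
  rcases eq_or_ne ‖Q x‖ 0 with hx | hx
  · simpa [hx] using norm_inner_le_norm (𝕜 := ℂ) (Q (T x)) (Q x)
  obtain ⟨u, hu, hxu⟩ := exists_norm_eq_one_and_eq_smul hx
  have hbdd : BddAbove {r | ∃ x, vnormA A x = 1 ∧ r = ‖innA A (T x) x‖} := by
    refine ⟨opnormA A T, ?_⟩
    rintro _ ⟨y, hy, rfl⟩
    rw [vnormA_eq_norm hQ] at hy
    rw [hQ]
    calc ‖⟪Q (T y), Q y⟫_ℂ‖ ≤ ‖Q (T y)‖ * ‖Q y‖ := norm_inner_le_norm _ _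
      _ ≤ opnormA A T * ‖Q y‖ * ‖Q y‖ := by
        gcongr
        exact h.norm_apply_le_opnormA hQ y
      _ = opnormA A T := by rw [hy, mul_one, mul_one]
  have hTu : ‖⟪Q (T u), Q u⟫_ℂ‖ ≤ wA A T :=
    le_csSup hbdd ⟨u, by rw [vnormA_eq_norm hQ, hu], by rw [hQ]⟩
  calc ‖⟪Q (T x), Q x⟫_ℂ‖ = ‖⟪Q (T u), Q u⟫_ℂ‖ * ‖Q x‖ ^ 2 := by
        conv_lhs => rw [hxu]
        simp only [map_smul, inner_smul_left, inner_smul_right, norm_mul, Complex.norm_conj,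
          Complex.norm_real, norm_norm]
        ring
    _ ≤ wA A T * ‖Q x‖ ^ 2 := by gcongr

theorem opnormA_le_of_abs_re_inner_le (hQ : ∀ x y, innA A x y = ⟪Q x, Q y⟫_ℂ)
    (h : IsAdjointWrt Q P P) {w : ℝ} (hw : 0 ≤ w)
    (hP : ∀ z, |(⟪Q (P z), Q z⟫_ℂ).re| ≤ w * ‖Q z‖ ^ 2) : opnormA A P ≤ w := by
  refine Real.sSup_le ?_ hw
  rintro _ ⟨x, hx, rfl⟩
  rw [vnormA_eq_norm hQ] at hx ⊢
  exact h.norm_apply_le_of_abs_re_inner_le hw hP hx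

theorem IsAdjointWrt.opnormA_reA_le_wA (hQ : ∀ x y, innA A x y = ⟪Q x, Q y⟫_ℂ)
    (h : IsAdjointWrt Q T T') : opnormA A (ReA T T') ≤ wA A T :=
  opnormA_le_of_abs_re_inner_le hQ h.reA (wA_nonneg A T) fun z => by
    rw [h.re_inner_reA]
    exact (Complex.abs_re_le_norm _).trans (h.norm_inner_le_wA hQ z)

theorem IsAdjointWrt.opnormA_imA_le_wA (hQ : ∀ x y, innA A x y = ⟪Q x, Q y⟫_ℂ)
    (h : IsAdjointWrt Q T T') : opnormA A (ImA T T') ≤ wA A T :=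
  opnormA_le_of_abs_re_inner_le hQ h.imA (wA_nonneg A T) fun z => by
    rw [h.re_inner_imA, abs_neg]
    exact (Complex.abs_im_le_norm _).trans (h.norm_inner_le_wA hQ z)

theorem norm_inner_comp_add_norm_inner_comp_le (hQ : ∀ x y, innA A x y = ⟪Q x, Q y⟫_ℂ)
    (hT : IsAdjointWrt Q T T') (hX : IsAdjointWrt Q X X') (hY : IsAdjointWrt Q Y Y') {x : E}
    (hx : ‖Q x‖ = 1) :
    ‖⟪Q (T (X x)), Q x⟫_ℂ‖ + ‖⟪Q (Y (T x)), Q x⟫_ℂ‖ ≤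
      2 * √2 * max (opnormA A X) (opnormA A Y) *
        √(wA A T ^ 2 - |opnormA A (ReA T T') ^ 2 - opnormA A (ImA T T') ^ 2| / 2) := by
  set M := max (opnormA A X) (opnormA A Y)
  have hXx : ‖Q (X x)‖ ≤ M := by
    have hX_le := hX.norm_apply_le_opnormA hQ x
    rw [hx, mul_one] at hX_le
    exact hX_le.trans (le_max_left _ _)
  have hY'x : ‖Q (Y' x)‖ ≤ M := by
    have hY_le := hY.norm_apply_adjoint_le_opnormA hQ x
    rw [hx, mul_one] at hY_le
    exact hY_le.trans (le_max_right _ _)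
  have hTX : ‖⟪Q (T (X x)), Q x⟫_ℂ‖ ≤ M * ‖Q (T' x)‖ := by
    rw [hT]
    exact (norm_inner_le_norm _ _).trans (by gcongr)
  have hYT : ‖⟪Q (Y (T x)), Q x⟫_ℂ‖ ≤ M * ‖Q (T x)‖ := by
    rw [hY, mul_comm]
    exact (norm_inner_le_norm _ _).trans (by gcongr)
  have hRe : ‖Q (ReA T T' x)‖ ≤ opnormA A (ReA T T') := by
    simpa [hx] using hT.reA.norm_apply_le_opnormA hQ x
  have hIm : ‖Q (ImA T T' x)‖ ≤ opnormA A (ImA T T') := by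
    simpa [hx] using hT.imA.norm_apply_le_opnormA hQ x
  have hpar : ‖Q (T' x)‖ ^ 2 + ‖Q (T x)‖ ^ 2 ≤
      2 * (opnormA A (ReA T T') ^ 2 + opnormA A (ImA T T') ^ 2) := by
    rw [add_comm, norm_sq_add_norm_sq_eq]
    gcongr
  have hsum := add_le_two_mul_sqrt_two_mul_sqrt (norm_nonneg _) (norm_nonneg _)
    (opnormA_nonneg _ _) (opnormA_nonneg _ _) (hT.opnormA_reA_le_wA hQ) (hT.opnormA_imA_le_wA hQ)
    hpar
  calc _ ≤ M * ‖Q (T' x)‖ + M * ‖Q (T x)‖ := add_le_add hTX hYT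
    _ = M * (‖Q (T' x)‖ + ‖Q (T x)‖) := by ring
    _ ≤ M * _ := mul_le_mul_of_nonneg_left hsum ((opnormA_nonneg A X).trans (le_max_left _ _))
    _ = _ := by ring

end SeminormA

theorem ContinuousLinearMap.IsPositive.exists_innA_eq_inner {A : H →L[ℂ] H} (hA : A.IsPositive) :
    ∃ Q : H →L[ℂ] H, ∀ x y, innA A x y = ⟪Q x, Q y⟫_ℂ := by
  obtain ⟨B, rfl⟩ := CStarAlgebra.nonneg_iff_eq_star_mul_self.1 ((nonneg_iff_isPositive A).2 hA)
  exact ⟨B, fun x y => by simp [innA, star_eq_adjoint, adjoint_inner_left]⟩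

theorem IsAAdjoint.isAdjointWrt {F : Type*} [NormedAddCommGroup F] [InnerProductSpace ℂ F]
    {A S S' : H →L[ℂ] H} {Q : H →L[ℂ] F} (hA : IsSelfAdjoint A)
    (hQ : ∀ x y, innA A x y = ⟪Q x, Q y⟫_ℂ) (h : IsAAdjoint A S S') : IsAdjointWrt Q S S' :=
  fun u v => by
    have hAsymm (x y : H) : ⟪A x, y⟫_ℂ = ⟪x, A y⟫_ℂ := hA.isSymmetric x y
    have hAS : A (S' v) = (adjoint S) (A v) := DFunLike.congr_fun h v
    rw [← hQ, ← hQ, innA, innA, hAsymm, hAsymm, hAS, adjoint_inner_right]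

theorem stmt14 (A T Ts X Xs Y Ys : H →L[ℂ] H) (hA : A.IsPositive)
    (hT : IsAAdjoint A T Ts) (hX : IsAAdjoint A X Xs) (hY : IsAAdjoint A Y Ys) :
    wA A (T.comp X + Y.comp T) ≤
        2 * Real.sqrt 2 * max (opnormA A X) (opnormA A Y) *
          Real.sqrt (wA A T ^ 2 - |opnormA A (ReA T Ts) ^ 2 - opnormA A (ImA T Ts) ^ 2| / 2) ∧
      wA A (T.comp X - Y.comp T) ≤
        2 * Real.sqrt 2 * max (opnormA A X) (opnormA A Y) *
          Real.sqrt (wA A T ^ 2 - |opnormA A (ReA T Ts) ^ 2 - opnormA A (ImA T Ts) ^ 2| / 2) := by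
  obtain ⟨Q, hQ⟩ := hA.exists_innA_eq_inner
  have hT' := hT.isAdjointWrt hA.isSelfAdjoint hQ
  have hX' := hX.isAdjointWrt hA.isSelfAdjoint hQ
  have hY' := hY.isAdjointWrt hA.isSelfAdjoint hQ
  set R := 2 * √2 * max (opnormA A X) (opnormA A Y) *
    √(wA A T ^ 2 - |opnormA A (ReA T Ts) ^ 2 - opnormA A (ImA T Ts) ^ 2| / 2)
  have hbound (x : H) (hx : vnormA A x = 1) :
      ‖innA A (T (X x)) x‖ + ‖innA A (Y (T x)) x‖ ≤ R := by
    rw [hQ, hQ]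
    exact norm_inner_comp_add_norm_inner_comp_le hQ hT' hX' hY' (by rwa [← vnormA_eq_norm hQ])
  have hR : 0 ≤ R :=
    mul_nonneg (mul_nonneg (by positivity) ((opnormA_nonneg A X).trans (le_max_left _ _)))
      (Real.sqrt_nonneg _)
  constructor <;> refine Real.sSup_le ?_ hR <;> rintro _ ⟨x, hx, rfl⟩
  · calc ‖innA A ((T.comp X + Y.comp T) x) x‖
        = ‖innA A (T (X x)) x + innA A (Y (T x)) x‖ := by simp [innA]
      _ ≤ R := (norm_add_le _ _).trans (hbound x hx)
  · calc ‖innA A ((T.comp X - Y.comp T) x) x‖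
        = ‖innA A (T (X x)) x - innA A (Y (T x)) x‖ := by simp [innA]
      _ ≤ R := (norm_sub_le _ _).trans (hbound x hx)
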